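/- Let f : Finset (Fin n) → ℝ be a normalized, monotone, submodular function, let r < n, and suppose that for every J ⊆ {1,…,n} with |J| = r we have f(univ) - f(J) ≥ c for a fixed constant c ≥ 0. Then f(univ) ≥ (n/(n-r)) · c. -/

import Mathlib

open Finset

/-!
Telescoping the marginal gains of a submodular `f` with `f ∅ ≥ 0` along `s` gives
`(#s - 1) f s ≤ ∑ i ∈ s, f (s \ {i})`. Summing this over all `(k+1)`-sets and
double counting the pairs `(s, i ∈ s)` yields Han's inequality: the mean of `f` over `k`-sets,
divided by `k`, is nonincreasing in `k`. Comparing `k = r` with `k = n` bounds `r f(univ) / n` by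
the mean of `f` over the `r`-sets, which the hypothesis bounds by `f(univ) - c`.
-/

section SetFunction

variable {α : Type*} [DecidableEq α]

theorem sub_one_mul_le_sum_erase (f : Finset α → ℝ) (h0 : 0 ≤ f ∅)
    (hsub : ∀ A B : Finset α, f (A ∪ B) + f (A ∩ B) ≤ f A + f B) (s : Finset α) :
    ((#s : ℝ) - 1) * f s ≤ ∑ i ∈ s, f (s.erase i) := by
  induction s using Finset.induction_on with
  | empty => simpa using h0
  | @insert j t hj ih =>
    have hpair : ∀ i ∈ t, f (insert j t) + f (t.erase i) ≤ f (insert j (t.erase i)) + f t := by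
      intro i hi
      have hunion : insert j (t.erase i) ∪ t = insert j t := by
        ext; simp only [mem_union, mem_insert, mem_erase]; grind
      have hinter : insert j (t.erase i) ∩ t = t.erase i := by
        ext; simp only [mem_inter, mem_insert, mem_erase]; grind
      simpa [hunion, hinter] using hsub (insert j (t.erase i)) t
    have herase : ∀ i ∈ t, (insert j t).erase i = insert j (t.erase i) := fun i hi =>
      erase_insert_of_ne (ne_of_mem_of_not_mem hi hj).symm
    rw [sum_insert hj, erase_insert hj, card_insert_of_notMem hj,
      sum_congr rfl fun i hi => congrArg f (herase i hi)]
    have := sum_le_sum hpair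
    simp only [sum_add_distrib, sum_const, nsmul_eq_mul] at this
    push_cast
    linarith

theorem sum_powersetCard_succ_sum_erase [Fintype α] {M : Type*} [AddCommMonoid M]
    (g : Finset α → M) (k : ℕ) :
    ∑ s ∈ powersetCard (k + 1) univ, ∑ i ∈ s, g (s.erase i) =
      (Fintype.card α - k) • ∑ t ∈ powersetCard k univ, g t := by
  have hcompl : ∀ t ∈ powersetCard k (univ : Finset α),
      (Fintype.card α - k) • g t = ∑ _i ∈ tᶜ, g t := by
    intro t ht
    rw [sum_const, card_compl, (mem_powersetCard.mp ht).2]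
  rw [smul_sum, sum_congr rfl hcompl, sum_sigma', sum_sigma']
  refine sum_nbij' (fun x => ⟨x.1.erase x.2, x.2⟩) (fun y => ⟨insert y.2 y.1, y.2⟩)
    ?_ ?_ ?_ ?_ (fun _ _ => rfl)
  · rintro ⟨s, i⟩ h
    simp only [mem_sigma, mem_powersetCard] at h ⊢
    simp [card_erase_of_mem h.2, h.1.2]
  · rintro ⟨t, i⟩ h
    simp only [mem_sigma, mem_powersetCard, mem_compl] at h ⊢
    simp [card_insert_of_notMem h.2, h.1.2]
  · rintro ⟨s, i⟩ h
    simp only [mem_sigma] at h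
    simp [insert_erase h.2]
  · rintro ⟨t, i⟩ h
    simp only [mem_sigma, mem_compl] at h
    simp [erase_insert h.2]

theorem mul_sum_powersetCard_succ_le [Fintype α] (f : Finset α → ℝ) (h0 : 0 ≤ f ∅)
    (hsub : ∀ A B : Finset α, f (A ∪ B) + f (A ∩ B) ≤ f A + f B) (k : ℕ) :
    (k : ℝ) * ∑ s ∈ powersetCard (k + 1) univ, f s ≤
      (Fintype.card α - k : ℕ) * ∑ t ∈ powersetCard k univ, f t := by
  calc (k : ℝ) * ∑ s ∈ powersetCard (k + 1) univ, f s
      = ∑ s ∈ powersetCard (k + 1) univ, ((#s : ℝ) - 1) * f s := by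
        rw [mul_sum]
        refine sum_congr rfl fun s hs => ?_
        simp [(mem_powersetCard.mp hs).2]
    _ ≤ ∑ s ∈ powersetCard (k + 1) univ, ∑ i ∈ s, f (s.erase i) :=
        sum_le_sum fun s _ => sub_one_mul_le_sum_erase f h0 hsub s
    _ = (Fintype.card α - k : ℕ) * ∑ t ∈ powersetCard k univ, f t := by
        rw [sum_powersetCard_succ_sum_erase, nsmul_eq_mul]

theorem card_mul_choose_mul_le_mul_sum_powersetCard [Fintype α] (f : Finset α → ℝ)
    (h0 : 0 ≤ f ∅) (hsub : ∀ A B : Finset α, f (A ∪ B) + f (A ∩ B) ≤ f A + f B)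
    {n k : ℕ} (hn : Fintype.card α = n) (hk : k ≤ n) :
    (k * n.choose k : ℝ) * f univ ≤ n * ∑ s ∈ powersetCard k univ, f s := by
  induction hk using Nat.decreasingInduction with
  | self => simp [← hn, ← card_univ, powersetCard_self]
  | of_succ k hkn ih =>
    have hchoose : ((n.choose (k + 1) : ℕ) * (k + 1) : ℝ) = n.choose k * (n - k : ℕ) := by
      exact_mod_cast Nat.choose_succ_right_eq n k
    have hpos : (0 : ℝ) < (n - k : ℕ) := by exact_mod_cast Nat.sub_pos_of_lt hkn
    refine le_of_mul_le_mul_left ?_ hpos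
    push_cast at ih
    calc ((n - k : ℕ) : ℝ) * ((k * n.choose k : ℝ) * f univ)
        = k * (((k + 1) * n.choose (k + 1) : ℝ) * f univ) := by
          linear_combination (-(k : ℝ) * f univ) * hchoose
      _ ≤ k * (n * ∑ s ∈ powersetCard (k + 1) univ, f s) := by gcongr
      _ = n * (k * ∑ s ∈ powersetCard (k + 1) univ, f s) := by ring
      _ ≤ n * ((n - k : ℕ) * ∑ t ∈ powersetCard k univ, f t) := by
        refine mul_le_mul_of_nonneg_left ?_ n.cast_nonneg
        exact hn ▸ mul_sum_powersetCard_succ_le f h0 hsub k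
      _ = ((n - k : ℕ) : ℝ) * (n * ∑ t ∈ powersetCard k univ, f t) := by ring

end SetFunction

theorem polymatroid_lower_bound_general {n : ℕ} (f : Finset (Fin n) → ℝ)
    (h0 : f ∅ = 0)
    (hsub : ∀ A B : Finset (Fin n), f (A ∪ B) + f (A ∩ B) ≤ f A + f B)
    (r : ℕ) (h2 : r < n) (c : ℝ)
    (hgap : ∀ J : Finset (Fin n), J.card = r → f univ - f J ≥ c) :
    f univ ≥ ((n : ℝ) / ((n : ℝ) - (r : ℝ))) * c := by
  have han := card_mul_choose_mul_le_mul_sum_powersetCard f h0.ge hsub (Fintype.card_fin n) h2.le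
  have hsum : ∑ J ∈ powersetCard r univ, f J ≤ n.choose r * (f univ - c) := by
    calc ∑ J ∈ powersetCard r univ, f J ≤ ∑ _J ∈ powersetCard r univ, (f univ - c) :=
          sum_le_sum fun J hJ => by linarith [hgap J (mem_powersetCard.mp hJ).2]
      _ = n.choose r * (f univ - c) := by
        rw [sum_const, card_powersetCard, card_univ, Fintype.card_fin, nsmul_eq_mul]
  have hchoose : (0 : ℝ) < n.choose r := by exact_mod_cast Nat.choose_pos h2.le
  have hscaled : r * f univ ≤ n * (f univ - c) := by
    refine le_of_mul_le_mul_left ?_ hchoose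
    linarith [mul_le_mul_of_nonneg_left hsum n.cast_nonneg]
  have hnr : (0 : ℝ) < n - r := sub_pos.mpr (by exact_mod_cast h2)
  rw [ge_iff_le, div_mul_eq_mul_div, div_le_iff₀ hnr]
  linarith

/-- Abstract key inequality: if `f` is a normalized, monotone, submodular function on
subsets of `Fin n`, `r < n`, and `f(univ) - f(J) ≥ c ≥ 0` for every `r`-subset `J`,
then `f(univ) ≥ (n/(n-r)) · c`. -/
theorem polymatroid_lower_bound {n : ℕ} (f : Finset (Fin n) → ℝ)
    (h0 : f ∅ = 0)
    (hmono : ∀ A B : Finset (Fin n), A ⊆ B → f A ≤ f B)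
    (hsub : ∀ A B : Finset (Fin n), f (A ∪ B) + f (A ∩ B) ≤ f A + f B)
    (r : ℕ) (h1 : 1 ≤ r) (h2 : r < n) (c : ℝ) (hc : 0 ≤ c)
    (hgap : ∀ J : Finset (Fin n), J.card = r → f univ - f J ≥ c) :
    f univ ≥ ((n : ℝ) / ((n : ℝ) - (r : ℝ))) * c :=
  polymatroid_lower_bound_general f h0 hsub r h2 c hgap
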